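/- Suppose a U(1)-covariant channel maps state ρ on H to a state of the form p σ ⊗ |succ⟩⟨succ| + (1−p) (I/d) ⊗ |fail⟩⟨fail| on H' ⊗ C², where the flag states and I/d are U(1)-invariant. Then for every k ≠ 0, p ‖σ^(k)‖₁ ≤ ‖ρ^(k)‖₁. -/

import Mathlib

/-!
Covariance forces `E (single i j 1)` to vanish at every entry `(a, b)` whose charge difference
`d a - d b` differs from `c i - c j`, so `E` commutes with taking mode components:
`E (ρ^(k)) = (E ρ)^(k)`. Since `I/d` and the flag projectors carry charge `0`, for `k ≠ 0` only the
success branch survives, `(E ρ)^(k) = p σ^(k) ⊗ |succ⟩⟨succ|`, whose trace norm is `p ‖σ^(k)‖₁`.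
What remains is that a channel contracts the trace norm, which follows from a Kraus decomposition
of the Choi matrix, polar decompositions and the Cauchy–Schwarz inequality.
-/

open Complex Matrix MeasureTheory
open scoped ComplexOrder

/-- The unitary representation of U(1) on a finite-dimensional Hilbert space with
orthonormal basis indexed by `ι`, where basis vector `i` carries integer charge `c i`:
`U(θ) = Σ_n e^{inθ} Π_n`. -/
noncomputable def Urep {ι : Type*} [Fintype ι] [DecidableEq ι] (c : ι → ℤ) (θ : ℝ) :
    Matrix ι ι ℂ :=
  Matrix.diagonal fun i => Complex.exp (Complex.I * (c i : ℂ) * (θ : ℂ))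

/-- The mode-`k` component of an operator: `A^(k) = Σ_n Π_{n+k} A Π_n`. -/
def modeComp {ι : Type*} [Fintype ι] [DecidableEq ι] (c : ι → ℤ) (k : ℤ)
    (A : Matrix ι ι ℂ) : Matrix ι ι ℂ :=
  Matrix.of fun i j => if c i - c j = k then A i j else 0

/-- The trace norm `‖A‖₁ = tr √(A†A)`. -/
noncomputable def traceNorm {ι : Type*} [Fintype ι] [DecidableEq ι]
    (A : Matrix ι ι ℂ) : ℝ :=
  (((Matrix.posSemidef_conjTranspose_mul_self A).1.eigenvectorUnitary.1 *
      Matrix.diagonal (((↑) : ℝ → ℂ) ∘ (√·) ∘ (Matrix.posSemidef_conjTranspose_mul_self A).1.eigenvalues) *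
      (star (Matrix.posSemidef_conjTranspose_mul_self A).1.eigenvectorUnitary : Matrix ι ι ℂ)).trace).re

/-- The Choi matrix of a linear superoperator. -/
noncomputable def choi {ι κ : Type*} [Fintype ι] [DecidableEq ι] [Fintype κ]
    (E : Matrix ι ι ℂ →ₗ[ℂ] Matrix κ κ ℂ) : Matrix (ι × κ) (ι × κ) ℂ :=
  Matrix.of fun p q => E (Matrix.single p.1 q.1 1) p.2 q.2

/-- A quantum channel: completely positive (positive semidefinite Choi matrix)
and trace preserving. -/
def IsCPTP {ι κ : Type*} [Fintype ι] [DecidableEq ι] [Fintype κ]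
    (E : Matrix ι ι ℂ →ₗ[ℂ] Matrix κ κ ℂ) : Prop :=
  (choi E).PosSemidef ∧ ∀ A : Matrix ι ι ℂ, (E A).trace = A.trace

/-- U(1)-covariance of a superoperator with respect to input charges `c`
and output charges `d`. -/
def IsCovariant {ι κ : Type*} [Fintype ι] [DecidableEq ι] [Fintype κ] [DecidableEq κ]
    (c : ι → ℤ) (d : κ → ℤ) (E : Matrix ι ι ℂ →ₗ[ℂ] Matrix κ κ ℂ) : Prop :=
  ∀ (θ : ℝ) (X : Matrix ι ι ℂ),
    E (Urep c θ * X * (Urep c θ)ᴴ) = Urep d θ * E X * (Urep d θ)ᴴ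

/-- A density operator (quantum state). -/
def IsDensity {ι : Type*} [Fintype ι] (ρ : Matrix ι ι ℂ) : Prop :=
  ρ.PosSemidef ∧ ρ.trace = 1

section TraceNorm

open scoped MatrixOrder Kronecker

variable {n m : Type*} [Fintype n] [DecidableEq n] [Fintype m] [DecidableEq m]

theorem traceNorm_eq_re_trace_sqrt (A : Matrix n n ℂ) :
    traceNorm A = (CFC.sqrt (Aᴴ * A)).trace.re := by
  have hA := posSemidef_conjTranspose_mul_self A
  rw [traceNorm, CFC.sqrt_eq_cfc, cfc_nnreal_eq_real _ (Aᴴ * A), hA.1.cfc_eq,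
    IsHermitian.cfc, Unitary.conjStarAlgAut_apply]
  congr 6 with i
  simp [max_eq_left (hA.eigenvalues_nonneg i)]

theorem traceNorm_smul (z : ℂ) (A : Matrix n n ℂ) :
    traceNorm (z • A) = ‖z‖ * traceNorm A := by
  have hS := (CFC.sqrt_nonneg (Aᴴ * A)).posSemidef
  have key : CFC.sqrt ((z • A)ᴴ * (z • A)) = (‖z‖ : ℂ) • CFC.sqrt (Aᴴ * A) := by
    refine CFC.sqrt_unique ?_ (hS.smul (by positivity)).nonneg
    rw [smul_mul_smul_comm, CFC.sqrt_mul_sqrt_self _ (posSemidef_conjTranspose_mul_self A).nonneg,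
      conjTranspose_smul, smul_mul_smul_comm, ← sq, ← Complex.conj_mul']
    rfl
  rw [traceNorm_eq_re_trace_sqrt, traceNorm_eq_re_trace_sqrt, key, trace_smul, smul_eq_mul,
    Complex.re_ofReal_mul]

theorem traceNorm_kronecker (A : Matrix n n ℂ) (B : Matrix m m ℂ) :
    traceNorm (A ⊗ₖ B) = traceNorm A * traceNorm B := by
  have hA := (CFC.sqrt_nonneg (Aᴴ * A)).posSemidef
  have hB := (CFC.sqrt_nonneg (Bᴴ * B)).posSemidef
  have key : CFC.sqrt ((A ⊗ₖ B)ᴴ * (A ⊗ₖ B)) = CFC.sqrt (Aᴴ * A) ⊗ₖ CFC.sqrt (Bᴴ * B) := by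
    refine CFC.sqrt_unique ?_ (hA.kronecker hB).nonneg
    rw [← mul_kronecker_mul, CFC.sqrt_mul_sqrt_self _ (posSemidef_conjTranspose_mul_self A).nonneg,
      CFC.sqrt_mul_sqrt_self _ (posSemidef_conjTranspose_mul_self B).nonneg,
      conjTranspose_kronecker, mul_kronecker_mul]
  rw [traceNorm_eq_re_trace_sqrt, traceNorm_eq_re_trace_sqrt, traceNorm_eq_re_trace_sqrt, key,
    trace_kronecker, Complex.mul_re, ← (Complex.nonneg_iff.mp hA.trace_nonneg).2, zero_mul,
    sub_zero]

theorem traceNorm_single_self (a : m) : traceNorm (single a a (1 : ℂ)) = 1 := by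
  have hP : (single a a (1 : ℂ)).PosSemidef := by
    simpa using (posSemidef_conjTranspose_mul_self (single a a (1 : ℂ)))
  have hproj : (single a a (1 : ℂ))ᴴ * single a a 1 = single a a 1 * single a a 1 := by
    rw [hP.1.eq]
  rw [traceNorm_eq_re_trace_sqrt, hproj, CFC.sqrt_mul_self _ hP.nonneg, trace_single_eq_same,
    Complex.one_re]

end TraceNorm

theorem LinearMap.matrix_apply_eq_sum_single {R ι κ : Type*} [CommSemiring R] [Fintype ι]
    [DecidableEq ι] (E : Matrix ι ι R →ₗ[R] Matrix κ κ R) (X : Matrix ι ι R) (a b : κ) :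
    E X a b = ∑ i, ∑ j, X i j * E (Matrix.single i j 1) a b := by
  conv_lhs => rw [matrix_eq_sum_single X]
  simp only [map_sum, Matrix.sum_apply]
  refine Finset.sum_congr rfl fun i _ => Finset.sum_congr rfl fun j _ => ?_
  rw [← mul_one (X i j), ← smul_eq_mul, ← Matrix.smul_single, map_smul, Matrix.smul_apply,
    smul_eq_mul, smul_eq_mul, mul_one]

section Covariance

open scoped Kronecker

variable {ι κ : Type*} [Fintype ι] [DecidableEq ι] [Fintype κ] [DecidableEq κ]

theorem Urep_mul_mul_conjTranspose_apply (c : ι → ℤ) (θ : ℝ) (X : Matrix ι ι ℂ) (i j : ι) :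
    (Urep c θ * X * (Urep c θ)ᴴ) i j = exp (I * ((c i - c j : ℤ) : ℂ) * θ) * X i j := by
  rw [Urep, diagonal_conjTranspose, mul_diagonal, diagonal_mul, Pi.star_apply, RCLike.star_def,
    ← exp_conj, ← mul_rotate, ← exp_add]
  congr 2
  simp only [map_mul, conj_I, conj_ofReal, map_intCast]
  push_cast
  ring

theorem Urep_mul_single_mul_conjTranspose (c : ι → ℤ) (θ : ℝ) (i j : ι) :
    Urep c θ * single i j 1 * (Urep c θ)ᴴ = exp (I * ((c i - c j : ℤ) : ℂ) * θ) • single i j 1 := by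
  ext a b
  rw [Urep_mul_mul_conjTranspose_apply, Matrix.smul_apply, smul_eq_mul, single_apply]
  split_ifs with h
  · rw [h.1, h.2]
  · rw [mul_zero, mul_zero]

theorem exists_exp_mul_ne {m n : ℤ} (h : m ≠ n) :
    ∃ θ : ℝ, exp (I * (m : ℂ) * θ) ≠ exp (I * (n : ℂ) * θ) := by
  have hmn : ((m - n : ℤ) : ℂ) ≠ 0 := Int.cast_ne_zero.mpr (sub_ne_zero.mpr h)
  refine ⟨Real.pi / (m - n : ℤ), fun heq => ?_⟩
  have hsplit : exp (I * (m : ℂ) * (Real.pi / (m - n : ℤ) : ℝ))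
      = exp (I * (n : ℂ) * (Real.pi / (m - n : ℤ) : ℝ)) * exp (Real.pi * I) := by
    rw [← exp_add]
    congr 1
    push_cast at hmn ⊢
    field_simp
    ring
  rw [hsplit, exp_pi_mul_I, mul_neg_one, eq_comm, self_eq_neg] at heq
  exact exp_ne_zero _ heq

theorem IsCovariant.apply_single_eq_zero {c : ι → ℤ} {d : κ → ℤ}
    {E : Matrix ι ι ℂ →ₗ[ℂ] Matrix κ κ ℂ} (hcov : IsCovariant c d E) {i j : ι} {a b : κ}
    (h : c i - c j ≠ d a - d b) : E (single i j 1) a b = 0 := by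
  by_contra hne
  obtain ⟨θ, hθ⟩ := exists_exp_mul_ne h
  have := congr_fun₂ (hcov θ (single i j 1)) a b
  rw [Urep_mul_single_mul_conjTranspose, map_smul, Matrix.smul_apply, smul_eq_mul,
    Urep_mul_mul_conjTranspose_apply] at this
  exact hθ (mul_right_cancel₀ hne this)

theorem IsCovariant.map_modeComp {c : ι → ℤ} {d : κ → ℤ}
    {E : Matrix ι ι ℂ →ₗ[ℂ] Matrix κ κ ℂ} (hcov : IsCovariant c d E) (k : ℤ) (X : Matrix ι ι ℂ) :
    E (modeComp c k X) = modeComp d k (E X) := by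
  ext a b
  simp only [modeComp, of_apply]
  rw [E.matrix_apply_eq_sum_single, E.matrix_apply_eq_sum_single]
  simp only [of_apply]
  split_ifs with hab
  · refine Fintype.sum_congr _ _ fun i => Fintype.sum_congr _ _ fun j => ?_
    split_ifs with hij
    · rfl
    · rw [zero_mul, hcov.apply_single_eq_zero (by rwa [hab]), mul_zero]
  · refine Finset.sum_eq_zero fun i _ => Finset.sum_eq_zero fun j _ => ?_
    split_ifs with hij
    · rw [hcov.apply_single_eq_zero (by rwa [hij, ne_comm]), mul_zero]
    · rw [zero_mul]

theorem modeComp_add (c : ι → ℤ) (k : ℤ) (X Y : Matrix ι ι ℂ) :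
    modeComp c k (X + Y) = modeComp c k X + modeComp c k Y := by
  ext i j
  simp only [modeComp, of_apply, Matrix.add_apply]
  split_ifs <;> simp

theorem modeComp_smul (c : ι → ℤ) (k : ℤ) (z : ℂ) (X : Matrix ι ι ℂ) :
    modeComp c k (z • X) = z • modeComp c k X := by
  ext i j
  simp only [modeComp, of_apply, Matrix.smul_apply]
  split_ifs <;> simp

theorem modeComp_one {c : ι → ℤ} {k : ℤ} (hk : k ≠ 0) : modeComp c k (1 : Matrix ι ι ℂ) = 0 := by
  ext i j
  simp only [modeComp, of_apply, Matrix.zero_apply]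
  split_ifs with h
  · exact one_apply_ne fun hij => hk (by rw [← h, hij, sub_self])
  · rfl

theorem modeComp_kronecker (c : ι → ℤ) (k : ℤ) (X : Matrix ι ι ℂ) (Y : Matrix κ κ ℂ) :
    modeComp (fun q : ι × κ => c q.1) k (X ⊗ₖ Y) = modeComp c k X ⊗ₖ Y := by
  ext ⟨i, a⟩ ⟨j, b⟩
  simp only [modeComp, of_apply, kroneckerMap_apply]
  split_ifs <;> simp

end Covariance

section Polar

open scoped MatrixOrder

variable {n : Type*} [Fintype n] [DecidableEq n]

theorem exists_polar_decomposition (Y : Matrix n n ℂ) :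
    ∃ W : Matrix n n ℂ, Wᴴ * W ≤ 1 ∧ W * CFC.sqrt (Yᴴ * Y) = Y ∧
      Wᴴ * Y = CFC.sqrt (Yᴴ * Y) := by
  set Q := CFC.sqrt (Yᴴ * Y)
  have hQ : IsSelfAdjoint Q := (CFC.sqrt_nonneg _).isSelfAdjoint
  have hQQ : Q * Q = Yᴴ * Y :=
    CFC.sqrt_mul_sqrt_self _ (posSemidef_conjTranspose_mul_self Y).nonneg
  have hmul : ∀ f g : ℝ → ℝ, cfc f Q * cfc g Q = cfc (fun x => f x * g x) Q := fun f g =>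
    (cfc_mul f g Q (Q.finite_real_spectrum.continuousOn f)
      (Q.finite_real_spectrum.continuousOn g)).symm
  have hid : cfc id Q = Q := cfc_id ℝ Q
  -- Since `0⁻¹ = 0` in `ℝ`, `R` is the pseudo-inverse of `Q`, and each identity below is a
  -- pointwise identity of real functions, valid at `0` as well.
  set R := cfc (·⁻¹ : ℝ → ℝ) Q
  have hR : Rᴴ = R := (cfc_predicate (R := ℝ) _ Q : IsSelfAdjoint R).star_eq
  have hRQQ : R * (Q * Q) = Q := by
    rw [← hid, hmul, hmul]
    congr 1 with x
    rcases eq_or_ne x 0 with rfl | hx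
    · simp
    · simp [hx]
  have hQRQ : Q * R * Q = Q := by
    rw [← hid, hmul, hmul]
    congr 1 with x
    rcases eq_or_ne x 0 with rfl | hx
    · simp
    · simp [hx]
  refine ⟨Y * R, ?_, ?_, ?_⟩
  · rw [conjTranspose_mul, hR, mul_assoc, ← mul_assoc Yᴴ, ← hQQ, ← mul_assoc, hRQQ, ← hid, hmul]
    exact cfc_le_one _ _ fun x _ => mul_inv_le_one
  · rw [← sub_eq_zero, ← conjTranspose_mul_self_eq_zero]
    have hQH : Qᴴ = Q := hQ
    rw [show Y * R * Q - Y = Y * (R * Q - 1) by rw [mul_sub, mul_one, mul_assoc],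
      conjTranspose_mul, conjTranspose_sub, conjTranspose_one, conjTranspose_mul, hR, hQH]
    calc (Q * R - 1) * Yᴴ * (Y * (R * Q - 1)) = (Q * R * Q - Q) * (Q * R * Q - Q) := by
          rw [mul_assoc _ Yᴴ, ← mul_assoc Yᴴ, ← hQQ]
          noncomm_ring
      _ = 0 := by rw [hQRQ, sub_self, zero_mul]
  · rw [conjTranspose_mul, hR, mul_assoc, ← hQQ, hRQQ]

end Polar

section HilbertSchmidt

open scoped MatrixOrder

variable {n m : Type*} [Fintype n] [Fintype m]

theorem re_trace_conjTranspose_mul_self_eq_sum (A : Matrix n m ℂ) :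
    (Aᴴ * A).trace.re = ∑ p : n × m, ‖A p.1 p.2‖ ^ 2 := by
  rw [Fintype.sum_prod_type, Finset.sum_comm, trace, Complex.re_sum]
  refine Fintype.sum_congr _ _ fun j => ?_
  rw [diag_apply, mul_apply, Complex.re_sum]
  refine Fintype.sum_congr _ _ fun i => ?_
  rw [conjTranspose_apply, RCLike.star_def, Complex.conj_mul', ← Complex.ofReal_pow,
    Complex.ofReal_re]

theorem re_trace_conjTranspose_mul_self_nonneg (A : Matrix n m ℂ) : 0 ≤ (Aᴴ * A).trace.re := by
  rw [re_trace_conjTranspose_mul_self_eq_sum]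
  positivity

theorem norm_trace_conjTranspose_mul_le (A B : Matrix n m ℂ) :
    ‖(Aᴴ * B).trace‖ ≤ √(Aᴴ * A).trace.re * √(Bᴴ * B).trace.re := by
  have htrace : (Aᴴ * B).trace = ∑ p : n × m, star (A p.1 p.2) * B p.1 p.2 := by
    rw [Fintype.sum_prod_type, Finset.sum_comm]
    rfl
  calc ‖(Aᴴ * B).trace‖ ≤ ∑ p : n × m, ‖A p.1 p.2‖ * ‖B p.1 p.2‖ := by
        rw [htrace]
        refine (norm_sum_le _ _).trans_eq (Fintype.sum_congr _ _ fun p => ?_)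
        rw [norm_mul, norm_star]
    _ ≤ _ := by
        rw [re_trace_conjTranspose_mul_self_eq_sum, re_trace_conjTranspose_mul_self_eq_sum]
        exact Real.sum_mul_le_sqrt_mul_sqrt _ _ _

variable [DecidableEq n]

theorem re_trace_conjTranspose_mul_self_mul_le {W : Matrix n n ℂ} (hW : Wᴴ * W ≤ 1)
    (A : Matrix n m ℂ) : ((W * A)ᴴ * (W * A)).trace.re ≤ (Aᴴ * A).trace.re := by
  have h := ((le_iff.mp hW).conjTranspose_mul_mul_same A).trace_nonneg
  rw [Matrix.mul_sub, Matrix.sub_mul, Matrix.mul_one, trace_sub, sub_nonneg] at h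
  simpa only [conjTranspose_mul, Matrix.mul_assoc] using (Complex.le_def.mp h).1

end HilbertSchmidt

section Kraus

open scoped MatrixOrder

variable {ι κ : Type*} [Fintype ι] [DecidableEq ι] [Fintype κ]

theorem sum_conjTranspose_mul_eq_one_of_trace_eq {M : Type*} [Fintype M]
    {E : Matrix ι ι ℂ →ₗ[ℂ] Matrix κ κ ℂ} {K : M → Matrix κ ι ℂ}
    (hK : ∀ X, E X = ∑ m, K m * X * (K m)ᴴ) (htp : ∀ X, (E X).trace = X.trace) :
    ∑ m, (K m)ᴴ * K m = 1 := by
  ext i j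
  have hcyc : ∀ m, (K m * single j i (1 : ℂ) * (K m)ᴴ).trace = ((K m)ᴴ * K m) i j := fun m => by
    rw [trace_mul_cycle, trace_mul_single, MulOpposite.op_one, one_smul]
  have hone : (single j i (1 : ℂ)).trace = (1 : Matrix ι ι ℂ) i j := by
    simpa using trace_single_mul j i (1 : ℂ) 1
  have h := htp (single j i 1)
  rw [hK, trace_sum, hone] at h
  simpa only [hcyc, Matrix.sum_apply] using h

variable [DecidableEq κ]

theorem exists_kraus_of_posSemidef_choi {E : Matrix ι ι ℂ →ₗ[ℂ] Matrix κ κ ℂ}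
    (hE : (choi E).PosSemidef) :
    ∃ K : ι × κ → Matrix κ ι ℂ, ∀ X, E X = ∑ m, K m * X * (K m)ᴴ := by
  obtain ⟨B, hB⟩ := CStarAlgebra.nonneg_iff_eq_star_mul_self.mp hE.nonneg
  refine ⟨fun m => of fun a i => star (B m (i, a)), fun X => ?_⟩
  ext a b
  have hchoi : ∀ i j, E (single i j 1) a b = ∑ m, star (B m (i, a)) * B m (j, b) :=
    fun i j => congr_fun₂ hB (i, a) (j, b)
  rw [E.matrix_apply_eq_sum_single]
  simp only [hchoi, Matrix.sum_apply, mul_apply, of_apply,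
    conjTranspose_apply, star_star, Finset.mul_sum, Finset.sum_mul]
  rw [Finset.sum_comm_cycle]
  refine Fintype.sum_congr _ _ fun m => ?_
  rw [Finset.sum_comm]
  exact Fintype.sum_congr _ _ fun j => Fintype.sum_congr _ _ fun i => by ring

end Kraus

section Contractivity

open scoped MatrixOrder

variable {ι κ M : Type*} [Fintype ι] [DecidableEq ι] [Fintype κ] [Fintype M]

theorem sum_re_trace_kraus {K : M → Matrix κ ι ℂ} (hK : ∑ m, (K m)ᴴ * K m = 1)
    {ν : Type*} [Fintype ν] (A : Matrix ι ν ℂ) :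
    ∑ m, ((K m * A)ᴴ * (K m * A)).trace.re = (Aᴴ * A).trace.re := by
  have hsum : ∑ m, (K m * A)ᴴ * (K m * A) = Aᴴ * A := by
    simp only [conjTranspose_mul, Matrix.mul_assoc, ← Matrix.mul_sum]
    simp only [← Matrix.mul_assoc, ← Matrix.sum_mul, hK, Matrix.one_mul]
  rw [← Complex.re_sum, ← trace_sum, hsum]

variable [DecidableEq κ]

theorem IsCPTP.traceNorm_map_le {E : Matrix ι ι ℂ →ₗ[ℂ] Matrix κ κ ℂ} (hE : IsCPTP E)
    (X : Matrix ι ι ℂ) : traceNorm (E X) ≤ traceNorm X := by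
  obtain ⟨K, hK⟩ := exists_kraus_of_posSemidef_choi hE.1
  have hK1 := sum_conjTranspose_mul_eq_one_of_trace_eq hK hE.2
  obtain ⟨V, hV, hVP, -⟩ := exists_polar_decomposition X
  obtain ⟨W, hW, -, hWY⟩ := exists_polar_decomposition (E X)
  -- With `X = V S²` and `E X = W |E X|`, `‖E X‖₁ = Σₘ tr ((W Kₘ S)ᴴ (Kₘ V S))`; Cauchy–Schwarz in
  -- each term and then over `m` bounds this by `tr S² = ‖X‖₁`.
  set P := CFC.sqrt (Xᴴ * X)
  have hP : 0 ≤ P := CFC.sqrt_nonneg _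
  set S := CFC.sqrt P
  have hSH : Sᴴ = S := (CFC.sqrt_nonneg P).isSelfAdjoint
  have hSS : Sᴴ * S = P := by rw [hSH, CFC.sqrt_mul_sqrt_self P hP]
  have hterm : ∀ m, (Wᴴ * (K m * X * (K m)ᴴ)).trace
      = ((W * (K m * S))ᴴ * (K m * (V * S))).trace := fun m => by
    rw [← hVP, ← hSS, hSH, conjTranspose_mul, conjTranspose_mul, hSH,
      show Wᴴ * (K m * (V * (S * S)) * (K m)ᴴ) = (Wᴴ * K m * V * S) * (S * (K m)ᴴ) by
        simp only [Matrix.mul_assoc], trace_mul_comm]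
    simp only [Matrix.mul_assoc]
  rw [traceNorm_eq_re_trace_sqrt, traceNorm_eq_re_trace_sqrt, ← hWY, hK, Matrix.mul_sum, trace_sum]
  calc (∑ m, (Wᴴ * (K m * X * (K m)ᴴ)).trace).re
      ≤ ∑ m, ‖((W * (K m * S))ᴴ * (K m * (V * S))).trace‖ := by
        simp only [hterm]
        exact (Complex.re_le_norm _).trans (norm_sum_le _ _)
    _ ≤ ∑ m, √((K m * S)ᴴ * (K m * S)).trace.re *
          √((K m * (V * S))ᴴ * (K m * (V * S))).trace.re :=
        Finset.sum_le_sum fun m _ => (norm_trace_conjTranspose_mul_le _ _).trans <|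
          mul_le_mul_of_nonneg_right (Real.sqrt_le_sqrt
            (re_trace_conjTranspose_mul_self_mul_le hW _)) (Real.sqrt_nonneg _)
    _ ≤ √(∑ m, ((K m * S)ᴴ * (K m * S)).trace.re) *
          √(∑ m, ((K m * (V * S))ᴴ * (K m * (V * S))).trace.re) :=
        Real.sum_sqrt_mul_sqrt_le _ (fun m => re_trace_conjTranspose_mul_self_nonneg _)
          (fun m => re_trace_conjTranspose_mul_self_nonneg _)
    _ ≤ √P.trace.re * √P.trace.re := by
        rw [sum_re_trace_kraus hK1, sum_re_trace_kraus hK1, hSS]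
        exact mul_le_mul_of_nonneg_left (Real.sqrt_le_sqrt <| hSS ▸
          re_trace_conjTranspose_mul_self_mul_le hV S) (Real.sqrt_nonneg _)
    _ = P.trace.re := Real.mul_self_sqrt (hSS ▸ re_trace_conjTranspose_mul_self_nonneg S)

end Contractivity

open Kronecker in
theorem stmt_11_general {ι κ : Type*} [Fintype ι] [DecidableEq ι] [Fintype κ] [DecidableEq κ]
    (c : ι → ℤ) (d : κ → ℤ)
    (E : Matrix ι ι ℂ →ₗ[ℂ] Matrix (κ × Fin 2) (κ × Fin 2) ℂ)
    (hCPTP : IsCPTP E)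
    (hcov : IsCovariant c (fun q : κ × Fin 2 => d q.1) E)
    (ρ : Matrix ι ι ℂ)
    (σ : Matrix κ κ ℂ)
    (p : ℝ) (hp0 : 0 ≤ p)
    (hE : E ρ = (p : ℂ) • (σ ⊗ₖ Matrix.single (0 : Fin 2) (0 : Fin 2) (1:ℂ))
        + ((1 - p : ℝ) : ℂ) •
            ((((Fintype.card κ : ℂ))⁻¹ • (1 : Matrix κ κ ℂ)) ⊗ₖ
              Matrix.single (1 : Fin 2) (1 : Fin 2) (1:ℂ))) :
    ∀ k : ℤ, k ≠ 0 → p * traceNorm (modeComp d k σ) ≤ traceNorm (modeComp c k ρ) := by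
  intro k hk
  have hmode : modeComp (fun q : κ × Fin 2 => d q.1) k (E ρ)
      = (p : ℂ) • (modeComp d k σ ⊗ₖ Matrix.single (0 : Fin 2) (0 : Fin 2) (1 : ℂ)) := by
    rw [hE, modeComp_add, modeComp_smul, modeComp_smul, modeComp_kronecker, modeComp_kronecker,
      modeComp_smul, modeComp_one hk, smul_zero, zero_kronecker, smul_zero, add_zero]
  calc p * traceNorm (modeComp d k σ) = traceNorm (E (modeComp c k ρ)) := by
        rw [hcov.map_modeComp, hmode, traceNorm_smul, traceNorm_kronecker, traceNorm_single_self,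
          mul_one, Complex.norm_real, Real.norm_of_nonneg hp0]
    _ ≤ traceNorm (modeComp c k ρ) := hCPTP.traceNorm_map_le _

open Kronecker in
/-- if a U(1)-covariant channel maps ρ to
`p σ ⊗ |succ⟩⟨succ| + (1−p)(I/d) ⊗ |fail⟩⟨fail|` with U(1)-invariant flags, then
for every k ≠ 0, `p ‖σ^(k)‖₁ ≤ ‖ρ^(k)‖₁`. -/
theorem stmt_11 {ι κ : Type*} [Fintype ι] [DecidableEq ι] [Fintype κ] [DecidableEq κ]
    [Nonempty κ]
    (c : ι → ℤ) (d : κ → ℤ)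
    (E : Matrix ι ι ℂ →ₗ[ℂ] Matrix (κ × Fin 2) (κ × Fin 2) ℂ)
    (hCPTP : IsCPTP E)
    (hcov : IsCovariant c (fun q : κ × Fin 2 => d q.1) E)
    (ρ : Matrix ι ι ℂ) (hρ : IsDensity ρ)
    (σ : Matrix κ κ ℂ) (hσ : IsDensity σ)
    (p : ℝ) (hp0 : 0 ≤ p) (hp1 : p ≤ 1)
    (hE : E ρ = (p : ℂ) • (σ ⊗ₖ Matrix.single (0 : Fin 2) (0 : Fin 2) (1:ℂ))
        + ((1 - p : ℝ) : ℂ) •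
            ((((Fintype.card κ : ℂ))⁻¹ • (1 : Matrix κ κ ℂ)) ⊗ₖ
              Matrix.single (1 : Fin 2) (1 : Fin 2) (1:ℂ))) :
    ∀ k : ℤ, k ≠ 0 → p * traceNorm (modeComp d k σ) ≤ traceNorm (modeComp c k ρ) :=
  stmt_11_general c d E hCPTP hcov ρ σ p hp0 hE
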